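/- arXiv:1304.0269 — 4 statements merged into one kernel-verified Lean document; each statement's English description precedes it below -/
import Mathlib

section
/- For a real number q with 0<q<1 and integers n≥1, l≥0 with l≤n, we have ∑_{k=l+1}^n (1+q^k) · ([n choose k]_q / [n+k choose k]_q) · (-1)^k q^{k(k-1)/2} = (([l]_q - [n]_q)/[n]_q) · ([n choose l]_q / [n+l choose l]_q) · (-1)^l q^{l(l-1)/2}. -/
/-!
The identity telescopes. Writing `B(k) = [n choose k]_q / [n+k choose k]_q`, one has
`B(k+1) (1 - q^(n+k+1)) = B(k) (1 - q^(n-k))`, and with this the `k+1`-st summand equals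
`T(k) - T(k+1)`, where `T(l)` is the right-hand side; since `T(n) = 0`, the sum from `l+1` to `n`
is `T(l)`.
-/

open Finset

/-- q-analogue of a natural number: [m]_q = (1-q^m)/(1-q). -/
noncomputable def qnum (q : ℝ) (m : ℕ) : ℝ := (1 - q ^ m) / (1 - q)

/-- q-Pochhammer (q;q)_n = ∏_{k=0}^{n-1} (1 - q^{k+1}). -/
noncomputable def qPoch (q : ℝ) (n : ℕ) : ℝ := ∏ k ∈ Finset.range n, (1 - q ^ (k + 1))

/-- Gaussian q-binomial coefficient, 0 when m > n. -/
noncomputable def qbinom (q : ℝ) (n m : ℕ) : ℝ :=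
  if m ≤ n then qPoch q n / (qPoch q m * qPoch q (n - m)) else 0

/-- q-multiple harmonic star sum H_n^*[s₁,…,s_m]. -/
noncomputable def qHstar (q : ℝ) : List ℕ → ℕ → ℝ
  | [], _ => 1
  | s :: rest, n => ∑ k ∈ Finset.Icc 1 n, q ^ k / qnum q k ^ s * qHstar q rest k

/-- q-multiple zeta star value ζ_q^*[s₁,…,s_m]. -/
noncomputable def qZetaStar (q : ℝ) : List ℕ → ℝ
  | [] => 1
  | s :: rest => ∑' k : ℕ, q ^ (k + 1) / qnum q (k + 1) ^ s * qHstar q rest (k + 1)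

/-- strict multiple harmonic sum ∑_{n ≥ k₁ > … > k_r ≥ 1} ∏ 1/k_j^{p_j}. -/
noncomputable def Hstrict : List ℕ → ℕ → ℝ
  | [], _ => 1
  | p :: rest, n => ∑ k ∈ Finset.Icc 1 n, (1 : ℝ) / (k : ℝ) ^ p * Hstrict rest (k - 1)

/-- binomial-weighted strict multiple harmonic sum Ĥ_n(p). -/
noncomputable def Hhat : List ℕ → ℕ → ℝ
  | [], _ => 1
  | p :: rest, n => ∑ k ∈ Finset.Icc 1 n,
      ((n.choose k : ℝ) / ((n + k).choose n)) * ((1 : ℝ) / (k : ℝ) ^ p) * Hstrict rest (k - 1)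

/-- ordinary multiple harmonic star sum H_n^*(s₁,…,s_m). -/
noncomputable def HstarO : List ℕ → ℕ → ℝ
  | [], _ => 1
  | s :: rest, n => ∑ k ∈ Finset.Icc 1 n, (1 : ℝ) / (k : ℝ) ^ s * HstarO rest k

/-- ordinary multiple zeta star value. -/
noncomputable def zetaStarO : List ℕ → ℝ
  | [] => 1
  | s :: rest => ∑' k : ℕ, (1 : ℝ) / ((k : ℝ) + 1) ^ s * HstarO rest (k + 1)

/-- Merge a list of parts according to a comma(true)/plus(false) pattern. -/
def mergeComp : ℕ → List ℕ → List Bool → List ℕ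
  | a, [], _ => [a]
  | a, _ :: _, [] => [a]
  | a, b :: t, true :: bs => a :: mergeComp b t bs
  | a, b :: t, false :: bs => mergeComp (a + b) t bs

lemma qPoch_succ (q : ℝ) (n : ℕ) : qPoch q (n + 1) = qPoch q n * (1 - q ^ (n + 1)) :=
  prod_range_succ _ _

lemma one_sub_pow_ne_zero {q : ℝ} (hq : ∀ m ≠ 0, q ^ m ≠ 1) {m : ℕ} (hm : m ≠ 0) :
    1 - q ^ m ≠ 0 :=
  sub_ne_zero.2 (hq m hm).symm

lemma qPoch_ne_zero {q : ℝ} (hq : ∀ m ≠ 0, q ^ m ≠ 1) (n : ℕ) : qPoch q n ≠ 0 :=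
  prod_ne_zero_iff.2 fun k _ => one_sub_pow_ne_zero hq k.succ_ne_zero

lemma qbinom_of_le (q : ℝ) {n m : ℕ} (h : m ≤ n) :
    qbinom q n m = qPoch q n / (qPoch q m * qPoch q (n - m)) :=
  if_pos h

noncomputable def qbinomRatio (q : ℝ) (n k : ℕ) : ℝ := qbinom q n k / qbinom q (n + k) k

lemma qbinomRatio_succ_mul {q : ℝ} (hq : ∀ m ≠ 0, q ^ m ≠ 1) {n k : ℕ} (hk : k < n) :
    qbinomRatio q n (k + 1) * (1 - q ^ (n + k + 1)) = qbinomRatio q n k * (1 - q ^ (n - k)) := by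
  obtain ⟨m, rfl⟩ := Nat.exists_eq_add_of_lt hk
  have hm : k + m + 1 - k = m + 1 := by omega
  have hm' : k + m + 1 - (k + 1) = m := by omega
  rw [qbinomRatio, qbinomRatio, qbinom_of_le q hk.le, qbinom_of_le q (Nat.succ_le_of_lt hk),
    qbinom_of_le q (Nat.le_add_left _ _), qbinom_of_le q (Nat.le_add_left _ _), Nat.add_sub_cancel,
    Nat.add_sub_cancel, hm, hm', ← add_assoc, qPoch_succ, qPoch_succ, qPoch_succ, qPoch_succ]
  have hP := qPoch_ne_zero hq
  have hk1 := one_sub_pow_ne_zero hq k.succ_ne_zero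
  have hm1 := one_sub_pow_ne_zero hq m.succ_ne_zero
  have hnk1 := one_sub_pow_ne_zero hq (k + m + 1 + k).succ_ne_zero
  field_simp

noncomputable def qTerm (q : ℝ) (n k : ℕ) : ℝ :=
  (1 + q ^ k) * qbinomRatio q n k * (-1) ^ k * q ^ (k * (k - 1) / 2)

noncomputable def qTail (q : ℝ) (n l : ℕ) : ℝ :=
  (qnum q l - qnum q n) / qnum q n * qbinomRatio q n l * (-1) ^ l * q ^ (l * (l - 1) / 2)

lemma qTail_sub_qTail_succ {q : ℝ} (hq : ∀ m ≠ 0, q ^ m ≠ 1) {n k : ℕ} (hk : k < n) :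
    qTail q n k - qTail q n (k + 1) = qTerm q n (k + 1) := by
  have hB := qbinomRatio_succ_mul hq hk
  have hpow : q ^ (n - k) * q ^ k = q ^ n := by rw [← pow_add, Nat.sub_add_cancel hk.le]
  have h1 : 1 - q ≠ 0 := by simpa using one_sub_pow_ne_zero hq one_ne_zero
  have hn := one_sub_pow_ne_zero hq (Nat.ne_zero_of_lt hk)
  rw [show n + k + 1 = n + (k + 1) by omega, pow_add q n, pow_succ q k] at hB
  rw [qTail, qTail, qTerm, qnum, qnum, qnum, Nat.triangle_succ, pow_add q _ k, pow_succ (-1 : ℝ),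
    pow_succ q k]
  field_simp
  linear_combination
    q ^ (k * (k - 1) / 2) * q ^ k * hB - q ^ (k * (k - 1) / 2) * qbinomRatio q n k * hpow

lemma qTail_self (q : ℝ) (n : ℕ) : qTail q n n = 0 := by
  simp only [qTail, sub_self, zero_div, zero_mul]

lemma sum_Icc_qTerm {q : ℝ} (hq : ∀ m ≠ 0, q ^ m ≠ 1) {n l : ℕ} (hl : l ≤ n) :
    ∑ k ∈ Icc (l + 1) n, qTerm q n k = qTail q n l := by
  calc ∑ k ∈ Icc (l + 1) n, qTerm q n k
      = ∑ k ∈ Ico l n, (qTail q n k - qTail q n (k + 1)) := by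
        rw [← Ico_add_one_right_eq_Icc, ← sum_Ico_add' (qTerm q n) l n 1]
        exact sum_congr rfl fun k hk => (qTail_sub_qTail_succ hq (mem_Ico.1 hk).2).symm
    _ = qTail q n l - qTail q n n := by
        rw [← neg_sub, ← sum_Ico_sub (qTail q n) hl, ← sum_neg_distrib]
        simp only [neg_sub]
    _ = qTail q n l := by rw [qTail_self, sub_zero]

theorem stmt0_general (q : ℝ) (hq0 : 0 < q) (hq1 : q < 1) (n l : ℕ) (hl : l ≤ n) :
    ∑ k ∈ Finset.Icc (l + 1) n,
      (1 + q ^ k) * (qbinom q n k / qbinom q (n + k) k) * (-1 : ℝ) ^ k * q ^ (k * (k - 1) / 2)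
    = ((qnum q l - qnum q n) / qnum q n) * (qbinom q n l / qbinom q (n + l) l) *
        (-1 : ℝ) ^ l * q ^ (l * (l - 1) / 2) :=
  sum_Icc_qTerm (fun _ hm => (pow_lt_one₀ hq0.le hq1 hm).ne) hl

theorem stmt0 (q : ℝ) (hq0 : 0 < q) (hq1 : q < 1) (n l : ℕ) (hn : 1 ≤ n) (hl : l ≤ n) :
    ∑ k ∈ Finset.Icc (l + 1) n,
      (1 + q ^ k) * (qbinom q n k / qbinom q (n + k) k) * (-1 : ℝ) ^ k * q ^ (k * (k - 1) / 2)
    = ((qnum q l - qnum q n) / qnum q n) * (qbinom q n l / qbinom q (n + l) l) *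
        (-1 : ℝ) ^ l * q ^ (l * (l - 1) / 2) :=
  stmt0_general q hq0 hq1 n l hl
end

section
/- Let 0<q<1, let c>0 and c_1, c_2 be real numbers, and let (R_k) be a sequence of reals with |R_k| < k^{c_1} q^{c_2 k} for all k ≥ 1. Then lim_{n→∞} ∑_{k=1}^n q^{c k^2} (1 − [n choose k]_q/[n+k choose k]_q) R_k = 0. -/
open Finset

/-!
By Tannery's theorem it suffices to bound the terms uniformly in `n` by a summable sequence and to
show that each term tends to `0`. For `k ≤ n` the ratio of q-binomials is
`∏_{j<k} (1 - q^(n-k+j+1)) / (1 - q^(n+j+1))`, which lies in `[1 - k q^(n-k+1), 1]` by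
Bernoulli's inequality. Hence the `k`-th term is at most `k^c₁ q^(c k² + c₂ k)` in absolute value,
which is summable because the quadratic exponent eventually exceeds `k`, and it is
`O(q^(n-k+1))` as `n → ∞`.
-/

open Filter Topology

lemma tendsto_sum_Icc_of_dominated {G : Type*} [NormedAddCommGroup G] [CompleteSpace G]
    {f : ℕ → ℕ → G} {bound : ℕ → ℝ} (h_sum : Summable bound)
    (h_lim : ∀ k, 1 ≤ k → Tendsto (f · k) atTop (𝓝 0))
    (h_bound : ∀ n k, 1 ≤ k → k ≤ n → ‖f n k‖ ≤ bound k) :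
    Tendsto (fun n => ∑ k ∈ Icc 1 n, f n k) atTop (𝓝 0) := by
  classical
  set F : ℕ → ℕ → G := fun n k => if k ∈ Icc 1 n then f n k else 0
  have hF_lim (k : ℕ) : Tendsto (F · k) atTop (𝓝 0) := by
    rcases Nat.eq_zero_or_pos k with rfl | hk
    · simp [F]
    · refine (h_lim k hk).congr' ?_
      filter_upwards [eventually_ge_atTop k] with n hn
      simp [F, hn, Nat.one_le_iff_ne_zero.mp hk]
  have hF_bound (n k : ℕ) : ‖F n k‖ ≤ |bound k| := by
    by_cases hk : k ∈ Icc 1 n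
    · obtain ⟨hk1, hkn⟩ := mem_Icc.mp hk
      simp only [F, if_pos hk]
      exact (h_bound n k hk1 hkn).trans (le_abs_self _)
    · simp only [F, if_neg hk, norm_zero]
      exact abs_nonneg _
  have h := tendsto_tsum_of_dominated_convergence h_sum.abs hF_lim (.of_forall hF_bound)
  rw [tsum_zero] at h
  refine h.congr fun n => ?_
  rw [tsum_eq_sum (s := Icc 1 n) fun k hk => if_neg hk]
  exact sum_congr rfl fun k hk => if_pos hk

section QBinomial

variable {q : ℝ}

lemma one_sub_pow_succ_pos (hq0 : 0 ≤ q) (hq1 : q < 1) (i : ℕ) : 0 < 1 - q ^ (i + 1) :=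
  sub_pos.mpr (pow_lt_one₀ hq0 hq1 (Nat.succ_ne_zero i))

lemma qPoch_pos (hq0 : 0 ≤ q) (hq1 : q < 1) (n : ℕ) : 0 < qPoch q n :=
  prod_pos fun _ _ => one_sub_pow_succ_pos hq0 hq1 _

lemma qPoch_add (q : ℝ) (m k : ℕ) :
    qPoch q (m + k) = qPoch q m * ∏ j ∈ range k, (1 - q ^ (m + j + 1)) := by
  rw [qPoch, qPoch, prod_range_add]

lemma qbinom_div_qbinom_eq (hq0 : 0 ≤ q) (hq1 : q < 1) {n k : ℕ} (hkn : k ≤ n) :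
    qbinom q n k / qbinom q (n + k) k =
      (∏ j ∈ range k, (1 - q ^ (n - k + j + 1))) / ∏ j ∈ range k, (1 - q ^ (n + j + 1)) := by
  have hP := qPoch_pos hq0 hq1
  have h_split₁ := qPoch_add q (n - k) k
  have h_split₂ := qPoch_add q n k
  rw [Nat.sub_add_cancel hkn] at h_split₁
  have hP₁ : qPoch q (n - k) ≠ 0 := (hP _).ne'
  have hP₂ : ∏ j ∈ range k, (1 - q ^ (n + j + 1)) ≠ 0 :=
    right_ne_zero_of_mul (h_split₂ ▸ (hP (n + k)).ne')
  rw [qbinom, qbinom, if_pos hkn, if_pos (Nat.le_add_left k n), Nat.add_sub_cancel, h_split₂,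
    h_split₁]
  field_simp [(hP k).ne']

lemma qbinom_pos (hq0 : 0 ≤ q) (hq1 : q < 1) {n k : ℕ} (hkn : k ≤ n) : 0 < qbinom q n k := by
  rw [qbinom, if_pos hkn]
  have hP := qPoch_pos hq0 hq1
  exact div_pos (hP n) (mul_pos (hP k) (hP (n - k)))

lemma qbinom_div_qbinom_le_one (hq0 : 0 ≤ q) (hq1 : q < 1) {n k : ℕ} (hkn : k ≤ n) :
    qbinom q n k / qbinom q (n + k) k ≤ 1 := by
  rw [qbinom_div_qbinom_eq hq0 hq1 hkn,
    div_le_one (prod_pos fun j _ => one_sub_pow_succ_pos hq0 hq1 _)]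
  refine prod_le_prod (fun j _ => sub_nonneg.mpr (pow_le_one₀ hq0 hq1.le)) fun j _ => ?_
  gcongr 1 - ?_
  exact pow_le_pow_of_le_one hq0 hq1.le (by omega)

lemma one_sub_mul_pow_le_qbinom_div_qbinom (hq0 : 0 ≤ q) (hq1 : q < 1) {n k : ℕ}
    (hkn : k ≤ n) : 1 - k * q ^ (n - k + 1) ≤ qbinom q n k / qbinom q (n + k) k := by
  have h_factor_nonneg (i : ℕ) : 0 ≤ 1 - q ^ i := sub_nonneg.mpr (pow_le_one₀ hq0 hq1.le)
  have h_denom_pos : 0 < ∏ j ∈ range k, (1 - q ^ (n + j + 1)) :=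
    prod_pos fun j _ => one_sub_pow_succ_pos hq0 hq1 _
  have h_denom_le_one : ∏ j ∈ range k, (1 - q ^ (n + j + 1)) ≤ 1 :=
    prod_le_one (fun j _ => h_factor_nonneg _) fun j _ => sub_le_self _ (pow_nonneg hq0 _)
  have h_num : (1 - q ^ (n - k + 1)) ^ k ≤ ∏ j ∈ range k, (1 - q ^ (n - k + j + 1)) := by
    calc (1 - q ^ (n - k + 1)) ^ k = ∏ _j ∈ range k, (1 - q ^ (n - k + 1)) := by simp
      _ ≤ _ := prod_le_prod (fun j _ => h_factor_nonneg _) fun j _ => by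
          gcongr 1 - ?_
          exact pow_le_pow_of_le_one hq0 hq1.le (by omega)
  have h_bernoulli : 1 + k * -q ^ (n - k + 1) ≤ (1 + -q ^ (n - k + 1)) ^ k :=
    one_add_mul_le_pow (by linarith [pow_le_one₀ (n := n - k + 1) hq0 hq1.le]) k
  rw [qbinom_div_qbinom_eq hq0 hq1 hkn]
  calc 1 - k * q ^ (n - k + 1) ≤ ∏ j ∈ range k, (1 - q ^ (n - k + j + 1)) := by
        rw [← sub_eq_add_neg] at h_bernoulli; linarith
    _ ≤ _ := le_div_self (prod_nonneg fun j _ => h_factor_nonneg _) h_denom_pos h_denom_le_one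

lemma abs_one_sub_qbinom_div_qbinom_le_one (hq0 : 0 ≤ q) (hq1 : q < 1) {n k : ℕ}
    (hkn : k ≤ n) : |1 - qbinom q n k / qbinom q (n + k) k| ≤ 1 := by
  have h_nonneg : 0 ≤ qbinom q n k / qbinom q (n + k) k :=
    div_nonneg (qbinom_pos hq0 hq1 hkn).le (qbinom_pos hq0 hq1 (Nat.le_add_left k n)).le
  rw [abs_le]
  constructor <;> linarith [qbinom_div_qbinom_le_one hq0 hq1 hkn]

lemma tendsto_one_sub_qbinom_div_qbinom (hq0 : 0 ≤ q) (hq1 : q < 1) (k : ℕ) :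
    Tendsto (fun n => 1 - qbinom q n k / qbinom q (n + k) k) atTop (𝓝 0) := by
  have h_geom : Tendsto (fun n : ℕ => q ^ (n - k + 1)) atTop (𝓝 0) :=
    (tendsto_pow_atTop_nhds_zero_of_lt_one hq0 hq1).comp
      ((tendsto_add_atTop_nat 1).comp (tendsto_sub_atTop_nat k))
  refine tendsto_of_tendsto_of_tendsto_of_le_of_le' tendsto_const_nhds
    (by simpa using h_geom.const_mul (k : ℝ)) ?_ ?_
  all_goals
    filter_upwards [eventually_ge_atTop k] with n hkn
  · linarith [qbinom_div_qbinom_le_one hq0 hq1 hkn]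
  · linarith [one_sub_mul_pow_le_qbinom_div_qbinom hq0 hq1 hkn]

end QBinomial

lemma summable_rpow_mul_rpow_quadratic {q : ℝ} (hq0 : 0 < q) (hq1 : q < 1) {c : ℝ} (hc : 0 < c)
    (a b : ℝ) : Summable fun k : ℕ => (k : ℝ) ^ a * q ^ (c * (k : ℝ) ^ 2 + b * k) := by
  refine Summable.of_norm_bounded_eventually_nat
    (summable_pow_mul_geometric_of_norm_lt_one ⌈a⌉₊ (by rwa [Real.norm_of_nonneg hq0.le])) ?_
  have h_linear : ∀ᶠ k : ℕ in atTop, 1 - b ≤ c * k :=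
    (tendsto_natCast_atTop_atTop.const_mul_atTop hc).eventually_ge_atTop _
  filter_upwards [h_linear, eventually_ge_atTop 1] with k hk hk1
  have hk1' : (1 : ℝ) ≤ k := by exact_mod_cast hk1
  have h_exponent : (k : ℝ) ≤ c * (k : ℝ) ^ 2 + b * k := by nlinarith
  rw [Real.norm_of_nonneg (by positivity)]
  calc (k : ℝ) ^ a * q ^ (c * (k : ℝ) ^ 2 + b * k) ≤ (k : ℝ) ^ (⌈a⌉₊ : ℝ) * q ^ (k : ℝ) := by
        gcongr ?_ * ?_
        · exact Real.rpow_le_rpow_of_exponent_le hk1' (Nat.le_ceil a)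
        · exact Real.rpow_le_rpow_of_exponent_ge hq0 hq1.le h_exponent
    _ = (k : ℝ) ^ ⌈a⌉₊ * q ^ k := by rw [Real.rpow_natCast, Real.rpow_natCast]

theorem stmt13 (q : ℝ) (hq0 : 0 < q) (hq1 : q < 1) (c c₁ c₂ : ℝ) (hc : 0 < c)
    (R : ℕ → ℝ) (hR : ∀ k : ℕ, 1 ≤ k → |R k| < (k : ℝ) ^ c₁ * q ^ (c₂ * k)) :
    Filter.Tendsto
      (fun n : ℕ => ∑ k ∈ Finset.Icc 1 n,
        q ^ (c * (k : ℝ) ^ 2) * (1 - qbinom q n k / qbinom q (n + k) k) * R k)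
      Filter.atTop (nhds 0) := by
  refine tendsto_sum_Icc_of_dominated (summable_rpow_mul_rpow_quadratic hq0 hq1 hc c₁ c₂)
    (fun k _ => by
      simpa using ((tendsto_one_sub_qbinom_div_qbinom hq0.le hq1 k).const_mul _).mul_const (R k))
    fun n k hk hkn => ?_
  calc ‖q ^ (c * (k : ℝ) ^ 2) * (1 - qbinom q n k / qbinom q (n + k) k) * R k‖
      = q ^ (c * (k : ℝ) ^ 2) * |1 - qbinom q n k / qbinom q (n + k) k| * |R k| := by
        rw [norm_mul, norm_mul, Real.norm_of_nonneg (Real.rpow_nonneg hq0.le _), Real.norm_eq_abs,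
          Real.norm_eq_abs]
    _ ≤ q ^ (c * (k : ℝ) ^ 2) * 1 * ((k : ℝ) ^ c₁ * q ^ (c₂ * k)) := by
        gcongr
        exacts [abs_one_sub_qbinom_div_qbinom_le_one hq0.le hq1 hkn, (hR k hk).le]
    _ = (k : ℝ) ^ c₁ * q ^ (c * (k : ℝ) ^ 2 + c₂ * k) := by rw [Real.rpow_add hq0]; ring
end

section
/- Let 0<q<1 and l ≥ 1. Define F(l,k) = (q^{k-l}/[k]_q^2)([k choose l]_q/[k+l choose l]_q) and G(l,k) = ((1-q^{k-l})(1-q^{k+l})/q^{k-l}) F(l,k). Then (1-q^l)^2 F(l,k) = G(l,k+1) − G(l,k) for all integers k ≥ l. -/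
open Finset

lemma qbinom_succ_left (q : ℝ) {n l : ℕ} (hln : l ≤ n) :
    qbinom q (n + 1) l = qbinom q n l * (1 - q ^ (n + 1)) / (1 - q ^ (n + 1 - l)) := by
  rw [qbinom, qbinom, if_pos (by omega), if_pos hln, show n + 1 - l = n - l + 1 by omega,
    qPoch_succ, qPoch_succ]
  generalize 1 - q ^ (n + 1) = a, 1 - q ^ (n - l + 1) = b
  ring

lemma qbinom_ratio_succ (q : ℝ) {n l : ℕ} (hln : l ≤ n) :
    qbinom q (n + 1) l / qbinom q (n + 1 + l) l =
      (1 - q ^ (n + 1)) ^ 2 / ((1 - q ^ (n + 1 - l)) * (1 - q ^ (n + l + 1))) *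
        (qbinom q n l / qbinom q (n + l) l) := by
  rw [show n + 1 + l = n + l + 1 by omega, qbinom_succ_left q hln,
    qbinom_succ_left q (by omega : l ≤ n + l), show n + l + 1 - l = n + 1 by omega]
  generalize 1 - q ^ (n + 1) = a, 1 - q ^ (n + 1 - l) = b, 1 - q ^ (n + l + 1) = c
  simp only [div_eq_mul_inv, mul_inv, inv_inv]
  ring

theorem stmt16 (q : ℝ) (hq0 : 0 < q) (hq1 : q < 1) (l : ℕ) (hl : 1 ≤ l)
    (F G : ℕ → ℕ → ℝ)
    (hF : ∀ l k, F l k = q ^ (k - l) / qnum q k ^ 2 * (qbinom q k l / qbinom q (k + l) l))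
    (hG : ∀ l k, G l k = (1 - q ^ (k - l)) * (1 - q ^ (k + l)) / q ^ (k - l) * F l k)
    (k : ℕ) (hk : l ≤ k) :
    (1 - q ^ l) ^ 2 * F l k = G l (k + 1) - G l k := by
  obtain ⟨m, rfl⟩ := Nat.exists_eq_add_of_le hk
  have hq : q ≠ 0 := hq0.ne'
  have hpow : ∀ n ≠ 0, 1 - q ^ n ≠ 0 := fun n hn =>
    sub_ne_zero.2 (pow_lt_one₀ hq0.le hq1 hn).ne'
  have h1 : 1 - q ≠ 0 := sub_ne_zero.2 hq1.ne'
  have hlm := hpow (l + m) (by omega)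
  have hm1 := hpow (m + 1) (by omega)
  have hlml1 := hpow (l + m + l + 1) (by omega)
  have hlm1 := hpow (l + m + 1) (by omega)
  set W := qbinom q (l + m) l / qbinom q (l + m + l) l with hW
  have hFk : F l (l + m) = (1 - q) ^ 2 * W * (q ^ m / (1 - q ^ (l + m)) ^ 2) := by
    rw [hF, ← hW, Nat.add_sub_cancel_left, qnum]
    field_simp
  have hGk : G l (l + m) =
      (1 - q) ^ 2 * W * ((1 - q ^ m) * (1 - q ^ (l + m + l)) / (1 - q ^ (l + m)) ^ 2) := by
    rw [hG, hFk, Nat.add_sub_cancel_left]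
    field_simp
  have hGsucc : G l (l + m + 1) = (1 - q) ^ 2 * W := by
    rw [hG, hF, qbinom_ratio_succ q (by omega), ← hW, show l + m + 1 - l = m + 1 by omega,
      show l + m + 1 + l = l + m + l + 1 by omega, qnum]
    field_simp
  have key : (1 - q ^ (l + m)) ^ 2 - (1 - q ^ m) * (1 - q ^ (l + m + l)) =
      q ^ m * (1 - q ^ l) ^ 2 := by
    ring
  rw [hFk, hGk, hGsucc]
  field_simp
  linear_combination key
end

section
/- For any positive integer n and nonnegative integers s_1,…,s_m (m ≥ 1), the ordinary multiple harmonic sum satisfies H_n^*({2}^{s_1},1,…,{2}^{s_m},1) = ∑_{p=(2s_1+1)∘…∘(2s_m+1)} 2^{l(p)} Ĥ_n(p), where the sum is over all 2^{m-1} ways of replacing each ∘ by comma or plus, and l(p) is the number of parts of the resulting composition p. -/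
open Finset

/-!
Both sides vanish at `n = 0`, so it suffices to compare forward differences in `n`. On the left,
`H*_{n+1}(s, L) - H*_n(s, L) = H*_{n+1}(L) / (n+1)^s` strips the first letter of the word. On the
right, the weight `w(n,k) = C(n,k) / C(n+k,n)` satisfies `(n+1)² w(n,k) = ((n+1)² - k²) w(n+1,k)`,
so the difference of `Ĥ(p+2, r)` is `Ĥ_{n+1}(p, r) / (n+1)²`: a letter `2` of the word matches
lowering the first part by `2`. When the first part is `1`, the telescoping identity
`∑_{j<k≤n} k w(n,k) = w(n,j) (n-j) / 2` gives
`2 ΔĤ(1, q, r) + ΔĤ(q+1, r) = Ĥ_{n+1}(q, r) / (n+1)`, which pairs the comma and the plus choice for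
the first `∘` and matches the letter `1`. Induction on the word finishes the proof.
-/

noncomputable def hatWeight (n k : ℕ) : ℝ := (n.choose k : ℝ) / ((n + k).choose n)

namespace hatWeight

open Nat

lemma of_lt {n k : ℕ} (h : n < k) : hatWeight n k = 0 := by
  simp [hatWeight, Nat.choose_eq_zero_of_lt h]

@[simp] lemma zero_right (n : ℕ) : hatWeight n 0 = 1 := by simp [hatWeight]

lemma eq_factorial {n k : ℕ} (h : k ≤ n) :
    hatWeight n k = (n ! : ℝ) ^ 2 / ((n - k)! * (n + k)!) := by
  rw [hatWeight, Nat.cast_choose ℝ h, Nat.cast_choose ℝ (Nat.le_add_right n k),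
    Nat.add_sub_cancel_left]
  field_simp

lemma add_one_left (n k : ℕ) :
    ((n : ℝ) + 1) ^ 2 * hatWeight n k = (((n : ℝ) + 1) ^ 2 - k ^ 2) * hatWeight (n + 1) k := by
  rcases lt_trichotomy k (n + 1) with h | rfl | h
  · obtain ⟨m, rfl⟩ := Nat.exists_eq_add_of_le (Nat.lt_succ_iff.mp h)
    rw [eq_factorial (by omega), eq_factorial (by omega),
      show k + m + 1 - k = m + 1 by omega, show k + m - k = m by omega,
      show k + m + 1 + k = (k + m + k) + 1 by omega]
    simp only [Nat.factorial_succ]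
    push_cast
    field_simp
    ring
  · simp [of_lt (Nat.lt_succ_self n)]
  · simp [of_lt h, of_lt (Nat.lt_of_succ_lt h)]

lemma add_one_right {n k : ℕ} (h : k < n) :
    ((n : ℝ) + k + 1) * hatWeight n (k + 1) = ((n : ℝ) - k) * hatWeight n k := by
  obtain ⟨m, rfl⟩ := Nat.exists_eq_add_of_lt h
  rw [eq_factorial (by omega), eq_factorial (by omega),
    show k + m + 1 - (k + 1) = m by omega, show k + m + 1 - k = m + 1 by omega,
    show k + m + 1 + (k + 1) = (k + m + 1 + k) + 1 by omega]
  simp only [Nat.factorial_succ]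
  push_cast
  field_simp
  ring

lemma sum_Ioc_mul {n j : ℕ} (h : j ≤ n) :
    ∑ k ∈ Ioc j n, (k : ℝ) * hatWeight n k = hatWeight n j * ((n : ℝ) - j) / 2 := by
  induction h using Nat.decreasingInduction with
  | self => simp
  | of_succ j hj ih =>
    rw [← insert_Ioc_add_one_left_eq_Ioc hj, sum_insert (by simp), ih]
    push_cast
    linear_combination add_one_right hj / 2

end hatWeight

lemma cast_ne_zero_of_mem_Icc_one {k N : ℕ} (hk : k ∈ Icc 1 N) : (k : ℝ) ≠ 0 :=
  Nat.cast_ne_zero.mpr (Nat.one_le_iff_ne_zero.mp (mem_Icc.mp hk).1)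

lemma sum_mul_Hstrict_cons (c : ℕ → ℝ) (q : ℕ) (r : List ℕ) (N : ℕ) :
    ∑ k ∈ Icc 1 N, c k * Hstrict (q :: r) (k - 1)
      = ∑ j ∈ Icc 1 N, (∑ k ∈ Ioc j N, c k) * (1 / (j : ℝ) ^ q * Hstrict r (j - 1)) := by
  simp only [Hstrict, mul_sum, sum_mul]
  exact sum_comm' (by intro k j; simp only [mem_Icc, mem_Ioc]; omega)

lemma Hhat_cons_eq_sum (p : ℕ) (r : List ℕ) (n : ℕ) :
    Hhat (p :: r) n = ∑ k ∈ Icc 1 n, hatWeight n k * (1 / (k : ℝ) ^ p) * Hstrict r (k - 1) :=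
  rfl

@[simp] lemma Hhat_cons_zero (p : ℕ) (r : List ℕ) : Hhat (p :: r) 0 = 0 := by
  simp [Hhat_cons_eq_sum]

lemma sq_mul_Hhat_cons_add_one_sub (p : ℕ) (r : List ℕ) (n : ℕ) :
    ((n : ℝ) + 1) ^ 2 * (Hhat (p :: r) (n + 1) - Hhat (p :: r) n)
      = ∑ k ∈ Icc 1 (n + 1), (k : ℝ) ^ 2 * hatWeight (n + 1) k * (1 / (k : ℝ) ^ p)
          * Hstrict r (k - 1) := by
  have extend : Hhat (p :: r) n
      = ∑ k ∈ Icc 1 (n + 1), hatWeight n k * (1 / (k : ℝ) ^ p) * Hstrict r (k - 1) := by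
    rw [sum_Icc_succ_top (by omega), hatWeight.of_lt (Nat.lt_succ_self n)]
    simp [Hhat_cons_eq_sum]
  rw [extend, Hhat_cons_eq_sum, mul_sub, mul_sum, mul_sum, ← sum_sub_distrib]
  refine sum_congr rfl fun k _ => ?_
  linear_combination -(1 / (k : ℝ) ^ p * Hstrict r (k - 1)) * hatWeight.add_one_left n k

lemma Hhat_add_two_add_one_sub (p : ℕ) (r : List ℕ) (n : ℕ) :
    Hhat ((p + 2) :: r) (n + 1) - Hhat ((p + 2) :: r) n
      = Hhat (p :: r) (n + 1) / ((n : ℝ) + 1) ^ 2 := by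
  rw [eq_div_iff (by positivity), mul_comm, sq_mul_Hhat_cons_add_one_sub, Hhat_cons_eq_sum]
  refine sum_congr rfl fun k hk => ?_
  have := cast_ne_zero_of_mem_Icc_one hk
  field_simp
  ring

lemma Hhat_one_add_one_sub (n : ℕ) :
    Hhat [1] (n + 1) - Hhat [1] n = 1 / (2 * ((n : ℝ) + 1)) := by
  have weighted_sum : ∑ k ∈ Icc 1 (n + 1),
      (k : ℝ) ^ 2 * hatWeight (n + 1) k * (1 / (k : ℝ) ^ 1) * Hstrict [] (k - 1)
        = ((n : ℝ) + 1) / 2 := by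
    calc _ = ∑ k ∈ Ioc 0 (n + 1), (k : ℝ) * hatWeight (n + 1) k := by
            refine sum_congr (Icc_add_one_left_eq_Ioc 0 (n + 1)) fun k hk => ?_
            have := cast_ne_zero_of_mem_Icc_one hk
            simp only [Hstrict]
            field_simp
      _ = _ := by simp [hatWeight.sum_Ioc_mul (Nat.zero_le (n + 1))]
  have h := sq_mul_Hhat_cons_add_one_sub 1 [] n
  rw [weighted_sum] at h
  have : (n : ℝ) + 1 ≠ 0 := by positivity
  rw [eq_div_iff (by positivity)]
  apply mul_left_cancel₀ this
  linear_combination 2 * h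

lemma Hhat_one_cons_add_one_sub (q : ℕ) (r : List ℕ) (n : ℕ) :
    2 * (Hhat (1 :: q :: r) (n + 1) - Hhat (1 :: q :: r) n)
        + (Hhat ((q + 1) :: r) (n + 1) - Hhat ((q + 1) :: r) n)
      = Hhat (q :: r) (n + 1) / ((n : ℝ) + 1) := by
  have swapped : ((n : ℝ) + 1) ^ 2 * (Hhat (1 :: q :: r) (n + 1) - Hhat (1 :: q :: r) n)
      = ∑ j ∈ Icc 1 (n + 1),
          hatWeight (n + 1) j * ((n : ℝ) + 1 - j) / 2 * (1 / (j : ℝ) ^ q * Hstrict r (j - 1)) := by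
    rw [sq_mul_Hhat_cons_add_one_sub]
    calc ∑ k ∈ Icc 1 (n + 1), (k : ℝ) ^ 2 * hatWeight (n + 1) k * (1 / (k : ℝ) ^ 1)
            * Hstrict (q :: r) (k - 1)
        = ∑ k ∈ Icc 1 (n + 1), (k : ℝ) * hatWeight (n + 1) k * Hstrict (q :: r) (k - 1) := by
          refine sum_congr rfl fun k hk => ?_
          have := cast_ne_zero_of_mem_Icc_one hk
          field_simp
      _ = _ := by
          rw [sum_mul_Hstrict_cons]
          refine sum_congr rfl fun j hj => ?_
          rw [hatWeight.sum_Ioc_mul (by simp only [mem_Icc] at hj; omega)]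
          push_cast
          ring
  have combined : 2 * ∑ j ∈ Icc 1 (n + 1),
          hatWeight (n + 1) j * ((n : ℝ) + 1 - j) / 2 * (1 / (j : ℝ) ^ q * Hstrict r (j - 1))
        + ∑ k ∈ Icc 1 (n + 1), (k : ℝ) ^ 2 * hatWeight (n + 1) k * (1 / (k : ℝ) ^ (q + 1))
            * Hstrict r (k - 1)
      = ((n : ℝ) + 1) * Hhat (q :: r) (n + 1) := by
    rw [Hhat_cons_eq_sum, mul_sum, mul_sum, ← sum_add_distrib]
    refine sum_congr rfl fun k hk => ?_
    have := cast_ne_zero_of_mem_Icc_one hk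
    field_simp
    ring
  have : (n : ℝ) + 1 ≠ 0 := by positivity
  rw [eq_div_iff this]
  apply mul_left_cancel₀ this
  linear_combination 2 * swapped + sq_mul_Hhat_cons_add_one_sub (q + 1) r n + combined

lemma sum_ofFn_succ {M : Type*} [AddCommMonoid M] (m : ℕ) (F : List Bool → M) :
    ∑ f : Fin (m + 1) → Bool, F (List.ofFn f)
      = ∑ f : Fin m → Bool, (F (true :: List.ofFn f) + F (false :: List.ofFn f)) := by
  rw [← (Fin.consEquiv fun _ => Bool).sum_comp, Fintype.sum_prod_type, Fintype.sum_bool,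
    ← sum_add_distrib]
  simp [Fin.consEquiv, List.ofFn_succ]

lemma sum_ofFn_congr {M : Type*} [AddCommMonoid M] {m m' : ℕ} (h : m = m') (F : List Bool → M) :
    ∑ f : Fin m → Bool, F (List.ofFn f) = ∑ f : Fin m' → Bool, F (List.ofFn f) := by
  subst h
  rfl

lemma exists_mergeComp_eq_cons (l : List ℕ) (bs : List Bool) :
    ∃ d T, ∀ x, mergeComp x l bs = (x + d) :: T := by
  induction l generalizing bs with
  | nil => exact ⟨0, [], fun x => by simp [mergeComp]⟩
  | cons y l ih =>
    match bs with
    | [] => exact ⟨0, [], fun x => by simp [mergeComp]⟩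
    | true :: bs => exact ⟨0, mergeComp y l bs, fun x => by simp [mergeComp]⟩
    | false :: bs =>
      obtain ⟨d, T, h⟩ := ih bs
      exact ⟨y + d, T, fun x => by simp only [mergeComp, h, Nat.add_assoc]⟩

noncomputable def mergeHhatSum (x : ℕ) (l : List ℕ) (n : ℕ) : ℝ :=
  ∑ f : Fin l.length → Bool,
    (2 : ℝ) ^ (mergeComp x l (List.ofFn f)).length * Hhat (mergeComp x l (List.ofFn f)) n

namespace mergeHhatSum

@[simp] lemma zero_right (x : ℕ) (l : List ℕ) : mergeHhatSum x l 0 = 0 := by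
  refine sum_eq_zero fun f _ => ?_
  obtain ⟨d, T, h⟩ := exists_mergeComp_eq_cons l (List.ofFn f)
  simp [h]

lemma one_nil (n : ℕ) : mergeHhatSum 1 [] n = 2 * Hhat [1] n := by
  simp [mergeHhatSum, mergeComp]

lemma add_two_add_one_sub (x : ℕ) (l : List ℕ) (n : ℕ) :
    mergeHhatSum (x + 2) l (n + 1) - mergeHhatSum (x + 2) l n
      = mergeHhatSum x l (n + 1) / ((n : ℝ) + 1) ^ 2 := by
  simp only [mergeHhatSum, ← sum_sub_distrib, sum_div]
  refine sum_congr rfl fun f _ => ?_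
  obtain ⟨d, T, h⟩ := exists_mergeComp_eq_cons l (List.ofFn f)
  rw [h, h, show x + 2 + d = x + d + 2 by omega, ← mul_sub, Hhat_add_two_add_one_sub]
  simp only [List.length_cons]
  ring

lemma one_cons_add_one_sub (y : ℕ) (l : List ℕ) (n : ℕ) :
    mergeHhatSum 1 (y :: l) (n + 1) - mergeHhatSum 1 (y :: l) n
      = mergeHhatSum y l (n + 1) / ((n : ℝ) + 1) := by
  have split (m : ℕ) := sum_ofFn_succ l.length fun bs =>
    (2 : ℝ) ^ (mergeComp 1 (y :: l) bs).length * Hhat (mergeComp 1 (y :: l) bs) m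
  simp only [mergeHhatSum, List.length_cons, split, ← sum_sub_distrib, sum_div]
  refine sum_congr rfl fun f _ => ?_
  obtain ⟨d, T, h⟩ := exists_mergeComp_eq_cons l (List.ofFn f)
  simp only [mergeComp, h, List.length_cons, show 1 + y + d = y + d + 1 by omega]
  linear_combination (2 : ℝ) ^ (T.length + 1) * Hhat_one_cons_add_one_sub (y + d) T n

end mergeHhatSum

lemma HstarO_cons_eq_of_sub (s : ℕ) (L : List ℕ) {f : ℕ → ℝ} (h₀ : f 0 = 0)
    (hsucc : ∀ n, f (n + 1) - f n = HstarO L (n + 1) / ((n : ℝ) + 1) ^ s) :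
    HstarO (s :: L) = f := by
  funext n
  induction n with
  | zero => simp [HstarO, h₀]
  | succ n ih =>
    have step : HstarO (s :: L) (n + 1)
        = HstarO (s :: L) n + HstarO L (n + 1) / ((n : ℝ) + 1) ^ s := by
      simp only [HstarO]
      rw [sum_Icc_succ_top (by omega)]
      push_cast
      ring
    rw [step, ih]
    linear_combination -hsucc n

lemma HstarO_one_nil : HstarO [1] = mergeHhatSum 1 [] :=
  HstarO_cons_eq_of_sub 1 [] (by simp) fun n => by
    rw [mergeHhatSum.one_nil, mergeHhatSum.one_nil, ← mul_sub, Hhat_one_add_one_sub]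
    simp only [HstarO]
    field_simp

lemma HstarO_one_cons {L : List ℕ} {y : ℕ} {l : List ℕ} (h : HstarO L = mergeHhatSum y l) :
    HstarO (1 :: L) = mergeHhatSum 1 (y :: l) :=
  HstarO_cons_eq_of_sub 1 L (by simp) fun n => by
    rw [mergeHhatSum.one_cons_add_one_sub, h, pow_one]

lemma HstarO_two_cons {L : List ℕ} {x : ℕ} {l : List ℕ} (h : HstarO L = mergeHhatSum x l) :
    HstarO (2 :: L) = mergeHhatSum (x + 2) l :=
  HstarO_cons_eq_of_sub 2 L (by simp) fun n => by
    rw [mergeHhatSum.add_two_add_one_sub, h]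

theorem HstarO_flatten_eq_mergeHhatSum (t : List ℕ) (a : ℕ) :
    HstarO (((a :: t).map (fun s => List.replicate s 2 ++ [1])).flatten)
      = mergeHhatSum (2 * a + 1) (t.map (fun s => 2 * s + 1)) := by
  induction t generalizing a with
  | nil =>
    induction a with
    | zero => exact HstarO_one_nil
    | succ a ih => exact HstarO_two_cons ih
  | cons b t ih =>
    induction a with
    | zero => exact HstarO_one_cons (ih b)
    | succ a iha => exact HstarO_two_cons iha

theorem stmt17_general (n : ℕ) (a : ℕ) (t : List ℕ) :
    HstarO (((a :: t).map (fun s => List.replicate s 2 ++ [1])).flatten) n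
    = ∑ f : Fin t.length → Bool,
        (2 : ℝ) ^ (mergeComp (2 * a + 1) (t.map (fun s => 2 * s + 1)) (List.ofFn f)).length *
          Hhat (mergeComp (2 * a + 1) (t.map (fun s => 2 * s + 1)) (List.ofFn f)) n := by
  rw [HstarO_flatten_eq_mergeHhatSum, mergeHhatSum]
  exact sum_ofFn_congr (List.length_map _) fun bs =>
    (2 : ℝ) ^ (mergeComp (2 * a + 1) (t.map (fun s => 2 * s + 1)) bs).length *
      Hhat (mergeComp (2 * a + 1) (t.map (fun s => 2 * s + 1)) bs) n

theorem stmt17 (n : ℕ) (hn : 1 ≤ n) (a : ℕ) (t : List ℕ) :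
    HstarO (((a :: t).map (fun s => List.replicate s 2 ++ [1])).flatten) n
    = ∑ f : Fin t.length → Bool,
        (2 : ℝ) ^ (mergeComp (2 * a + 1) (t.map (fun s => 2 * s + 1)) (List.ofFn f)).length *
          Hhat (mergeComp (2 * a + 1) (t.map (fun s => 2 * s + 1)) (List.ofFn f)) n :=
  stmt17_general n a t
end
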